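/- arXiv:2111.11637 — 6 statements merged into one kernel-verified Lean document; each statement's English description precedes it below -/
import Mathlib

section
/- For a random variable X with values in [0,1] and t ∈ [0,1], the two-dimensional Lebesgue measure of the region R_t = {(p,y) ∈ ℝ² : t ≤ y < Q_X(p), p ∈ (0,1]} equals the stop-loss transform π_X(t) = E[(X − t)₊]. -/
/-!
The quantile function is the generalized inverse of the distribution function `F` of `X`: by
right continuity of `F`, for `p ∈ (0,1]` we have `y < Q p ↔ F y < p`. Hence `R_t` is the region
`{(p, y) : t ≤ y, F y < p ≤ 1}`, whose section at height `y` has length `1 - F y = P(X > y)`.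
By Fubini its area is `∫_t^∞ P(X > y) dy`, and a second application of Fubini, to
`{(ω, y) : t < y < X ω}`, identifies this with `E[(X - t)₊]`.
-/

open MeasureTheory Set ProbabilityTheory Filter

lemma StieltjesFunction.csInf_le_iff_le_apply (f : StieltjesFunction ℝ) {p y : ℝ}
    (hne : ∃ x, p ≤ f x) (hbdd : BddBelow {x | p ≤ f x}) :
    sInf {x | p ≤ f x} ≤ y ↔ p ≤ f y := by
  refine ⟨fun hy => ?_, fun hy => csInf_le hbdd hy⟩
  rw [← f.iInf_Ioi_eq y]
  refine le_ciInf fun z => ?_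
  obtain ⟨x, hpx, hxz⟩ := exists_lt_of_csInf_lt hne (hy.trans_lt z.2)
  exact le_trans hpx (f.mono hxz.le)

namespace ProbabilityTheory

lemma bddBelow_setOf_le_cdf (ν : Measure ℝ) {p : ℝ} (hp : 0 < p) :
    BddBelow {x | p ≤ cdf ν x} := by
  obtain ⟨b, hb⟩ := eventually_atBot.1 ((tendsto_order.1 (tendsto_cdf_atBot ν)).2 p hp)
  exact ⟨b, fun x hx => le_of_not_ge fun hxb => (hb x hxb).not_ge hx⟩

lemma lt_csInf_setOf_le_cdf_iff (ν : Measure ℝ) {p y : ℝ} (hp : 0 < p)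
    (hne : ∃ x, p ≤ cdf ν x) :
    y < sInf {x | p ≤ cdf ν x} ↔ cdf ν y < p := by
  simpa only [not_le] using ((cdf ν).csInf_le_iff_le_apply hne (bddBelow_setOf_le_cdf ν hp)).not

lemma setOf_lt_csInf_setOf_le_cdf (ν : Measure ℝ) (h1 : cdf ν 1 = 1) (t : ℝ) :
    {q : ℝ × ℝ | q.1 ∈ Ioc 0 1 ∧ t ≤ q.2 ∧ q.2 < sInf {x | q.1 ≤ cdf ν x}}
      = {q | q.2 ∈ Ici t ∧ q.1 ∈ Ioc (cdf ν q.2) 1} := by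
  ext ⟨p, y⟩
  simp only [mem_ofPred_eq, mem_Ioc, mem_Ici]
  constructor
  · rintro ⟨⟨hp0, hp1⟩, hty, hyQ⟩
    exact ⟨hty, (lt_csInf_setOf_le_cdf_iff ν hp0 ⟨1, h1.symm ▸ hp1⟩).1 hyQ, hp1⟩
  · rintro ⟨hty, hFp, hp1⟩
    have hp0 : 0 < p := (cdf_nonneg ν y).trans_lt hFp
    exact ⟨⟨hp0, hp1⟩, hty, (lt_csInf_setOf_le_cdf_iff ν hp0 ⟨1, h1.symm ▸ hp1⟩).2 hFp⟩

lemma ofReal_one_sub_cdf (ν : Measure ℝ) [IsProbabilityMeasure ν] (y : ℝ) :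
    ENNReal.ofReal (1 - cdf ν y) = ν (Ioi y) := by
  rw [ENNReal.ofReal_sub _ (cdf_nonneg ν y), ENNReal.ofReal_one, ofReal_cdf, ← compl_Iic,
    prob_compl_eq_one_sub measurableSet_Iic]

end ProbabilityTheory

lemma volume_setOf_fst_mem_Ioc_eq_lintegral {f g : ℝ → ℝ} (hf : Measurable f)
    (hg : Measurable g) {s : Set ℝ} (hs : MeasurableSet s) :
    volume {q : ℝ × ℝ | q.2 ∈ s ∧ q.1 ∈ Ioc (f q.2) (g q.2)}
      = ∫⁻ y in s, ENNReal.ofReal (g y - f y) := by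
  have hR : MeasurableSet {q : ℝ × ℝ | q.2 ∈ s ∧ q.1 ∈ Ioc (f q.2) (g q.2)} :=
    measurable_swap (measurableSet_region_between_oc hf hg hs)
  rw [Measure.volume_eq_prod, Measure.prod_apply_symm hR, ← lintegral_indicator hs]
  congr 1 with y
  by_cases hy : y ∈ s
  · have hslice : (fun x => (x, y)) ⁻¹' {q : ℝ × ℝ | q.2 ∈ s ∧ q.1 ∈ Ioc (f q.2) (g q.2)}
        = Ioc (f y) (g y) := by
      ext x; simp [hy]
    rw [hslice, Real.volume_Ioc, indicator_of_mem hy]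
  · simp [hy]

-- Both sides are the `ν ⊗ volume`-measure of `{(x, y) : t < y < x}`.
lemma lintegral_measure_Ioi_eq_lintegral_ofReal_sub (ν : Measure ℝ) [SFinite ν] (t : ℝ) :
    ∫⁻ y in Ioi t, ν (Ioi y) = ∫⁻ x, ENNReal.ofReal (x - t) ∂ν := by
  have hR := measurableSet_regionBetween (measurable_const (a := t)) measurable_id
    MeasurableSet.univ
  calc ∫⁻ y in Ioi t, ν (Ioi y)
      = ∫⁻ y, ν ((fun x => (x, y)) ⁻¹' regionBetween (fun _ => t) id univ) := by
        rw [← lintegral_indicator measurableSet_Ioi]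
        congr 1 with y
        by_cases hy : y ∈ Ioi t
        · rw [indicator_of_mem hy]
          congr 1 with x
          simp [regionBetween, mem_Ioi.1 hy]
        · simp [regionBetween, show ¬ t < y from hy]
    _ = ν.prod volume (regionBetween (fun _ => t) id univ) := (Measure.prod_apply_symm hR).symm
    _ = ∫⁻ x, ENNReal.ofReal (x - t) ∂ν := by
        rw [volume_regionBetween_eq_lintegral' measurable_const measurable_id MeasurableSet.univ,
          Measure.restrict_univ]
        rfl

/-- The planar Lebesgue measure of the region
`R_t = {(p,y) : p ∈ (0,1], t ≤ y < Q_X(p)}` equals the stop-loss transform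
`π_X(t) = E[(X − t)₊]`. -/
theorem area_region_eq_stopLoss
    {Ω : Type*} [MeasureSpace Ω] [IsProbabilityMeasure (volume : Measure Ω)]
    (X : Ω → ℝ) (hX : Measurable X) (hXb : ∀ ω, X ω ∈ Icc (0:ℝ) 1)
    (Q : ℝ → ℝ)
    (hQ : ∀ p, Q p = sInf {x | p ≤ (volume {ω | X ω ≤ x}).toReal}) :
    ∀ t ∈ Icc (0:ℝ) 1,
      (volume {q : ℝ × ℝ | q.1 ∈ Ioc (0:ℝ) 1 ∧ t ≤ q.2 ∧ q.2 < Q q.1}).toReal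
        = ∫ ω, max (X ω - t) 0 := by
  intro t _
  set ν : Measure ℝ := volume.map X
  have : IsProbabilityMeasure ν := Measure.isProbabilityMeasure_map hX.aemeasurable
  have hcdf (y : ℝ) : cdf ν y = (volume {ω | X ω ≤ y}).toReal := by
    rw [cdf_eq_real, measureReal_def, Measure.map_apply hX measurableSet_Iic]
    rfl
  have h1 : cdf ν 1 = 1 := by
    have huniv : {ω | X ω ≤ 1} = univ := eq_univ_of_forall fun ω => (hXb ω).2
    simp [hcdf, huniv]
  have hQν : Q = fun p => sInf {x | p ≤ cdf ν x} := by
    simp only [hcdf]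
    exact funext hQ
  rw [hQν, setOf_lt_csInf_setOf_le_cdf ν h1 t,
    volume_setOf_fst_mem_Ioc_eq_lintegral (cdf ν).mono.measurable measurable_const
      measurableSet_Ici]
  simp_rw [ofReal_one_sub_cdf]
  rw [← setLIntegral_congr Ioi_ae_eq_Ici, lintegral_measure_Ioi_eq_lintegral_ofReal_sub,
    lintegral_map (by fun_prop) hX,
    integral_eq_lintegral_of_nonneg_ae (f := fun ω => max (X ω - t) 0)
      (.of_forall fun _ => le_max_right _ _) (by fun_prop)]
  simp
end

section
/- Let S be a random variable with values in [0,1], let v ∈ [0,1] and z ∈ [0,1−v], and define φ(s; v, z) = s for s ≤ v, φ(s; v, z) = v for v < s ≤ v + z, and φ(s; v, z) = s − z for s > v + z. Then the random variable R = φ(S; v, z) has stop-loss transform π_R(t) = π_S(t) − π_S(v) + π_S(v+z) for t ≤ v, and π_R(t) = π_S(t + z) for t > v. -/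
/-!
Pointwise, clipping `S` at `v` removes exactly the part of the excess over `t` that lies in the
band `(v, v + z]`: for `t ≤ v` one has `(φ(s) - t)₊ = (s - t)₊ - (s - v)₊ + (s - (v + z))₊`, while
for `t > v` the clipped values at most `v` do not contribute and the rest is `s` shifted down by
`z`, so `(φ(s) - t)₊ = (s - (t + z))₊`. Taking expectations gives the two formulas.
-/

open MeasureTheory Set

noncomputable def greedyClip (v z s : ℝ) : ℝ :=
  if s ≤ v then s else if s ≤ v + z then v else s - z

section Pointwise

variable {v z t : ℝ}

theorem max_greedyClip_sub_zero_of_le (hz : 0 ≤ z) (ht : t ≤ v) (s : ℝ) :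
    max (greedyClip v z s - t) 0 = max (s - t) 0 - max (s - v) 0 + max (s - (v + z)) 0 := by
  unfold greedyClip
  split_ifs <;> simp only [max_def] <;> split_ifs <;> linarith

theorem max_greedyClip_sub_zero_of_lt (hz : 0 ≤ z) (ht : v < t) (s : ℝ) :
    max (greedyClip v z s - t) 0 = max (s - (t + z)) 0 := by
  unfold greedyClip
  split_ifs <;> simp only [max_def] <;> split_ifs <;> linarith

end Pointwise

section Integral

variable {Ω : Type*} [MeasurableSpace Ω] {μ : Measure Ω} {S : Ω → ℝ} {v z t : ℝ}

theorem integral_max_greedyClip_sub_zero_of_le [IsFiniteMeasure μ] (hS : Integrable S μ)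
    (hz : 0 ≤ z) (ht : t ≤ v) :
    ∫ ω, max (greedyClip v z (S ω) - t) 0 ∂μ =
      ∫ ω, max (S ω - t) 0 ∂μ - ∫ ω, max (S ω - v) 0 ∂μ + ∫ ω, max (S ω - (v + z)) 0 ∂μ := by
  have hint (c : ℝ) : Integrable (fun ω => max (S ω - c) 0) μ :=
    (hS.sub (integrable_const c)).pos_part
  simp only [max_greedyClip_sub_zero_of_le hz ht]
  rw [integral_add _ (hint _), integral_sub (hint t) (hint v)]
  exact (hint t).sub (hint v)

theorem integral_max_greedyClip_sub_zero_of_lt (hz : 0 ≤ z) (ht : v < t) :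
    ∫ ω, max (greedyClip v z (S ω) - t) 0 ∂μ = ∫ ω, max (S ω - (t + z)) 0 ∂μ := by
  simp only [max_greedyClip_sub_zero_of_lt hz ht]

end Integral

theorem stopLoss_greedy_clip_general
    {Ω : Type*} [MeasureSpace Ω] [IsProbabilityMeasure (volume : Measure Ω)]
    (S : Ω → ℝ) (hS : Measurable S) (hSb : ∀ ω, S ω ∈ Icc (0:ℝ) 1)
    (v z : ℝ) (hz : z ∈ Icc (0:ℝ) (1 - v))
    (φ : ℝ → ℝ)
    (hφ : ∀ s, φ s = if s ≤ v then s else if s ≤ v + z then v else s - z)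
    (πS πR : ℝ → ℝ)
    (hπS : ∀ t, πS t = ∫ ω, max (S ω - t) 0)
    (hπR : ∀ t, πR t = ∫ ω, max (φ (S ω) - t) 0) :
    ∀ t ∈ Icc (0:ℝ) 1,
      (t ≤ v → πR t = πS t - πS v + πS (v + z)) ∧
      (v < t → πR t = πS (t + z)) := by
  obtain rfl : φ = greedyClip v z := funext hφ
  have hSint : Integrable S := .of_mem_Icc 0 1 hS.aemeasurable (.of_forall hSb)
  intro t _
  refine ⟨fun htv => ?_, fun hvt => ?_⟩
  · rw [hπR, hπS, hπS, hπS, integral_max_greedyClip_sub_zero_of_le hSint hz.1 htv]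
  · rw [hπR, hπS, integral_max_greedyClip_sub_zero_of_lt hz.1 hvt]

/-- Stop-loss transform of the greedily clipped random variable
`R = φ(S; v, z)`: `π_R(t) = π_S(t) − π_S(v) + π_S(v+z)` for `t ≤ v`, and
`π_R(t) = π_S(t+z)` for `t > v`. -/
theorem stopLoss_greedy_clip
    {Ω : Type*} [MeasureSpace Ω] [IsProbabilityMeasure (volume : Measure Ω)]
    (S : Ω → ℝ) (hS : Measurable S) (hSb : ∀ ω, S ω ∈ Icc (0:ℝ) 1)
    (v z : ℝ) (hv : v ∈ Icc (0:ℝ) 1) (hz : z ∈ Icc (0:ℝ) (1 - v))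
    (φ : ℝ → ℝ)
    (hφ : ∀ s, φ s = if s ≤ v then s else if s ≤ v + z then v else s - z)
    (πS πR : ℝ → ℝ)
    (hπS : ∀ t, πS t = ∫ ω, max (S ω - t) 0)
    (hπR : ∀ t, πR t = ∫ ω, max (φ (S ω) - t) 0) :
    ∀ t ∈ Icc (0:ℝ) 1,
      (t ≤ v → πR t = πS t - πS v + πS (v + z)) ∧
      (v < t → πR t = πS (t + z)) :=
  stopLoss_greedy_clip_general S hS hSb v z hz φ hφ πS πR hπS hπR
end

section
/- Let h₁,…,hₙ be positive reals with Σ h_k = 1 and α₁ > … > αₙ in (0,1]. Define H_k = Σ_{i≤k} h_i. The discrete random variable S̄ supported on {0, H₁, …, H_{n−1}, 1} with probabilities P(S̄ = 0) = 1 − α₁, P(S̄ = H_k) = α_k − α_{k+1} for 1 ≤ k ≤ n−1, and P(S̄ = 1) = αₙ, has stop-loss transform equal to the piecewise linear function joining the n+1 points (H_k, Σ_{i>k} h_i α_i) for k = 0,1,…,n (with H₀ = 0 and the last point (1, 0)). -/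
/-!
The stop-loss transform of a variable with finitely many atoms `H 0 < ⋯ < H n` is
`π(t) = ∑ⱼ P(S̄ = H j) (H j - t)₊`, and for `t ∈ [H k, H (k+1)]` only the atoms `j > k`
contribute, linearly in `t`. Writing the masses as differences `α j - α (j+1)` (with
`α (n+1) = 0`) and summing by parts turns `∑_{j>k} (α j - α (j+1)) (H j - t)` into
`∑_{j>k} h j α j - α (k+1) (t - H k)`, the line through the two prescribed points, whose slope
is `-α (k+1) = -h (k+1) α (k+1) / h (k+1)`.
-/

open MeasureTheory Set Finset

theorem integral_comp_eq_sum_of_forall_mem {Ω α E : Type*} [MeasurableSpace Ω]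
    [MeasurableSpace α] [MeasurableSingletonClass α] [NormedAddCommGroup E] [NormedSpace ℝ E]
    [CompleteSpace E] {μ : Measure Ω} [IsFiniteMeasure μ] {X : Ω → α} (hX : Measurable X)
    {s : Finset α} (hs : ∀ ω, X ω ∈ s) (f : α → E) :
    ∫ ω, f (X ω) ∂μ = ∑ x ∈ s, μ.real {ω | X ω = x} • f x := by
  have hlevel : ∀ x, MeasurableSet {ω | X ω = x} := fun x => hX (measurableSet_singleton x)
  have hdecomp : (fun ω => f (X ω))
      = fun ω => ∑ x ∈ s, {ω | X ω = x}.indicator (fun _ => f x) ω := by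
    funext ω
    rw [Finset.sum_eq_single_of_mem (X ω) (hs ω)]
    · simp
    · intro x _ hx
      exact indicator_of_notMem (Ne.symm hx) _
  rw [hdecomp, integral_finsetSum _ fun x _ => (integrable_const (f x)).indicator (hlevel x)]
  simp only [integral_indicator_const _ (hlevel _)]

theorem integral_comp_eq_sum_of_injOn {Ω α ι E : Type*} [MeasurableSpace Ω]
    [MeasurableSpace α] [MeasurableSingletonClass α] [NormedAddCommGroup E] [NormedSpace ℝ E]
    [CompleteSpace E] {μ : Measure Ω} [IsFiniteMeasure μ] {X : Ω → α} (hX : Measurable X)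
    {I : Finset ι} {x : ι → α} (hx : Set.InjOn x I) (hs : ∀ ω, ∃ i ∈ I, X ω = x i)
    (f : α → E) :
    ∫ ω, f (X ω) ∂μ = ∑ i ∈ I, μ.real {ω | X ω = x i} • f (x i) := by
  classical
  have hmem : ∀ ω, X ω ∈ I.image x := fun ω => by
    obtain ⟨i, hi, hXi⟩ := hs ω
    exact Finset.mem_image.mpr ⟨i, hi, hXi.symm⟩
  rw [integral_comp_eq_sum_of_forall_mem hX hmem, Finset.sum_image hx]

theorem sum_mul_max_sub_eq_sum_Icc {x p : ℕ → ℝ} {n k : ℕ} (hk : k < n)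
    (hx : MonotoneOn x (Set.Iic n)) {t : ℝ} (ht : t ∈ Set.Icc (x k) (x (k + 1))) :
    ∑ j ∈ Finset.Iic n, p j * max (x j - t) 0
      = ∑ j ∈ Finset.Icc (k + 1) n, p j * (x j - t) := by
  have hsub : Finset.Icc (k + 1) n ⊆ Finset.Iic n := fun j hj => by
    simp only [Finset.mem_Icc, Finset.mem_Iic] at hj ⊢; omega
  rw [← Finset.sum_subset hsub]
  · refine Finset.sum_congr rfl fun j hj => ?_
    rw [Finset.mem_Icc] at hj
    have hxj : x (k + 1) ≤ x j := hx (Set.mem_Iic.mpr (by omega)) (Set.mem_Iic.mpr hj.2) hj.1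
    rw [max_eq_left (sub_nonneg.mpr (ht.2.trans hxj))]
  · intro j hj hj'
    simp only [Finset.mem_Icc, Finset.mem_Iic, not_and, not_le] at hj hj'
    have hxj : x j ≤ x k := hx (Set.mem_Iic.mpr hj) (Set.mem_Iic.mpr (by omega)) (by omega)
    rw [max_eq_right (sub_nonpos.mpr (hxj.trans ht.1)), mul_zero]

theorem sum_Icc_sub_mul_by_parts {R : Type*} [CommRing R] (q x : ℕ → R) {a m : ℕ}
    (ham : a ≤ m) :
    ∑ j ∈ Finset.Icc a m, (q j - q (j + 1)) * x j
      = ∑ j ∈ Finset.Icc a m, q j * (x j - x (j - 1)) + q a * x (a - 1) - q (m + 1) * x m := by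
  induction m, ham using Nat.le_induction with
  | base => simp only [Finset.Icc_self, Finset.sum_singleton]; ring
  | succ m ham ih =>
    rw [Finset.sum_Icc_succ_top (by omega), Finset.sum_Icc_succ_top (by omega), ih,
      Nat.add_sub_cancel]
    ring

theorem strictMonoOn_sum_Icc_one {h : ℕ → ℝ} {n : ℕ}
    (hpos : ∀ i ∈ Finset.Icc 1 n, 0 < h i) :
    StrictMonoOn (fun k => ∑ i ∈ Finset.Icc 1 k, h i) (Set.Iic n) :=
  strictMonoOn_Iic_of_lt_succ fun m hm => by
    rw [Order.succ_eq_add_one, Finset.sum_Icc_succ_top (by omega)]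
    exact lt_add_of_pos_right _ (hpos _ (Finset.mem_Icc.mpr ⟨by omega, hm⟩))

theorem stopLoss_maximallyConvex_piecewiseLinear_general
    {Ω : Type*} [MeasureSpace Ω] [IsProbabilityMeasure (volume : Measure Ω)]
    (n : ℕ) (h α : ℕ → ℝ)
    (hpos : ∀ i ∈ Finset.Icc 1 n, 0 < h i)
    (hsum : ∑ i ∈ Finset.Icc 1 n, h i = 1)
    (H : ℕ → ℝ) (hH : ∀ k, H k = ∑ i ∈ Finset.Icc 1 k, h i)
    (Sbar : Ω → ℝ) (hmeas : Measurable Sbar)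
    (hsupp : ∀ ω, ∃ k ≤ n, Sbar ω = H k)
    (hPk : ∀ k ∈ Finset.Icc 1 (n - 1),
      (volume {ω | Sbar ω = H k}).toReal = α k - α (k + 1))
    (hPn : (volume {ω | Sbar ω = 1}).toReal = α n) :
    ∀ k < n, ∀ t ∈ Set.Icc (H k) (H (k + 1)),
      (∫ ω, max (Sbar ω - t) 0)
        = (∑ i ∈ Finset.Icc (k + 1) n, h i * α i)
          + (t - H k) / (H (k + 1) - H k) *
            ((∑ i ∈ Finset.Icc (k + 2) n, h i * α i)
              - ∑ i ∈ Finset.Icc (k + 1) n, h i * α i) := by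
  intro k hk t ht
  have hHn : H n = 1 := (hH n).trans hsum
  have hHmono : StrictMonoOn H (Set.Iic n) := funext hH ▸ strictMonoOn_sum_Icc_one hpos
  have hHsucc : ∀ j, H (j + 1) - H j = h (j + 1) := fun j => by
    rw [hH, hH, Finset.sum_Icc_succ_top (by omega), add_sub_cancel_left]
  -- extending `α` by `0` past `n` makes every atom `P(S̄ = H j) = q j - q (j + 1)`, even `j = n`
  set q : ℕ → ℝ := fun j => if j ≤ n then α j else 0 with hq
  have hprob : ∀ j ∈ Finset.Icc (k + 1) n,
      volume.real {ω | Sbar ω = H j} = q j - q (j + 1) := by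
    intro j hj
    rw [Finset.mem_Icc] at hj
    rcases hj.2.eq_or_lt with rfl | hjn
    · simp [hq, measureReal_def, hHn, hPn]
    · simp [hq, measureReal_def, hj.2, hjn, hPk j (Finset.mem_Icc.mpr ⟨by omega, by omega⟩)]
  have hcoef : ∀ j ∈ Finset.Icc (k + 1) n,
      q j * ((H j - t) - (H (j - 1) - t)) = h j * α j := by
    intro j hj
    rw [Finset.mem_Icc] at hj
    obtain ⟨i, rfl⟩ : ∃ i, j = i + 1 := ⟨j - 1, by omega⟩
    simp [hq, hj.2, ← hHsucc i, mul_comm]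
  calc ∫ ω, max (Sbar ω - t) 0
      = ∑ j ∈ Finset.Iic n, volume.real {ω | Sbar ω = H j} * max (H j - t) 0 :=
        integral_comp_eq_sum_of_injOn hmeas (Finset.coe_Iic n ▸ hHmono.injOn)
          (fun ω => by simpa using hsupp ω) (fun y => max (y - t) 0)
    _ = ∑ j ∈ Finset.Icc (k + 1) n, (q j - q (j + 1)) * (H j - t) := by
        rw [sum_mul_max_sub_eq_sum_Icc hk hHmono.monotoneOn ht]
        exact Finset.sum_congr rfl fun j hj => by rw [hprob j hj]
    _ = ∑ j ∈ Finset.Icc (k + 1) n, h j * α j - α (k + 1) * (t - H k) := by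
        rw [sum_Icc_sub_mul_by_parts q (fun j => H j - t) (by omega : k + 1 ≤ n),
          Finset.sum_congr rfl hcoef, show q (k + 1) = α (k + 1) from if_pos hk,
          show q (n + 1) = 0 from if_neg (by omega), Nat.add_sub_cancel]
        ring
    _ = _ := by
        rw [← Finset.insert_Icc_add_one_left_eq_Icc (by omega : k + 1 ≤ n),
          Finset.sum_insert (by simp), show k + 1 + 1 = k + 2 from rfl, hHsucc k]
        have hhk : h (k + 1) ≠ 0 :=
          (hpos (k + 1) (Finset.mem_Icc.mpr ⟨by omega, by omega⟩)).ne'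
        field_simp
        ring

/-- The stop-loss transform of the maximally convex distribution `S̄` is the
piecewise linear function joining the points `(H_k, Σ_{i>k} h_i α_i)`. -/
theorem stopLoss_maximallyConvex_piecewiseLinear
    {Ω : Type*} [MeasureSpace Ω] [IsProbabilityMeasure (volume : Measure Ω)]
    (n : ℕ) (hn : 1 ≤ n) (h α : ℕ → ℝ)
    (hpos : ∀ i ∈ Finset.Icc 1 n, 0 < h i)
    (hsum : ∑ i ∈ Finset.Icc 1 n, h i = 1)
    (hαmem : ∀ i ∈ Finset.Icc 1 n, α i ∈ Set.Ioc (0:ℝ) 1)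
    (hαdec : ∀ i ∈ Finset.Icc 1 (n - 1), α (i + 1) < α i)
    (H : ℕ → ℝ) (hH : ∀ k, H k = ∑ i ∈ Finset.Icc 1 k, h i)
    (Sbar : Ω → ℝ) (hmeas : Measurable Sbar)
    (hsupp : ∀ ω, ∃ k ≤ n, Sbar ω = H k)
    (hP0 : (volume {ω | Sbar ω = 0}).toReal = 1 - α 1)
    (hPk : ∀ k ∈ Finset.Icc 1 (n - 1),
      (volume {ω | Sbar ω = H k}).toReal = α k - α (k + 1))
    (hPn : (volume {ω | Sbar ω = 1}).toReal = α n) :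
    ∀ k < n, ∀ t ∈ Set.Icc (H k) (H (k + 1)),
      (∫ ω, max (Sbar ω - t) 0)
        = (∑ i ∈ Finset.Icc (k + 1) n, h i * α i)
          + (t - H k) / (H (k + 1) - H k) *
            ((∑ i ∈ Finset.Icc (k + 2) n, h i * α i)
              - ∑ i ∈ Finset.Icc (k + 1) n, h i * α i) :=
  stopLoss_maximallyConvex_piecewiseLinear_general n h α hpos hsum H hH Sbar hmeas hsupp hPk hPn
end

section
/- With h, α, H_k and the maximally convex distribution S̄ as above, S̄ is comonotonically (h,α)-decomposable: the random variables X_k = ((S̄ − H_{k−1})₊ − (S̄ − H_k)₊)/h_k for k = 1,…,n take values in [0,1], satisfy E[X_k] = α_k, are comonotonic (each X_k is a nondecreasing function of S̄), and satisfy S̄ = Σ_{k=1}^n h_k X_k. -/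
/-! Since `S̄` only takes the values `H₀ < H₁ < ⋯ < Hₙ`, it never lies strictly between
`H_{k-1}` and `H_k`, where the ramp `((x − H_{k−1})₊ − (x − H_k)₊)/h_k` is the only non-constant
part. Hence `X_k = 𝟙{S̄ ≥ H_k}`, which is `[0,1]`-valued and nondecreasing in `S̄`; its mean
`P(S̄ ≥ H_k) = Σ_{j ≥ k} P(S̄ = H_j)` telescopes to `α_k`, and `Σ_k h_k 𝟙{H_j ≥ H_k} = H_j`. -/

open MeasureTheory Set Finset

lemma ramp_div_eq_ite {a b x : ℝ} (hab : a < b) (hx : x ∉ Set.Ioo a b) :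
    (max (x - a) 0 - max (x - b) 0) / (b - a) = if b ≤ x then 1 else 0 := by
  rw [Set.mem_Ioo, not_and_or, not_lt, not_lt] at hx
  split_ifs with hbx
  · rw [max_eq_left (by linarith), max_eq_left (by linarith), sub_sub_sub_cancel_left,
      div_self (sub_ne_zero.mpr hab.ne')]
  · rw [max_eq_right (by rcases hx with hx | hx <;> linarith), max_eq_right (by linarith),
      sub_zero, zero_div]

lemma sum_Icc_eq_of_eq_sub_succ {α p : ℕ → ℝ} {k n : ℕ} (hkn : k ≤ n)
    (hp : ∀ j ∈ Finset.Ico k n, p j = α j - α (j + 1)) (hpn : p n = α n) :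
    ∑ j ∈ Finset.Icc k n, p j = α k := by
  have htel := sum_Ico_sub (fun j => -α j) hkn
  simp only [neg_sub_neg] at htel
  rw [← Finset.Ico_add_one_right_eq_Icc, sum_Ico_succ_top hkn, sum_congr rfl hp, htel, hpn]
  ring

lemma measureReal_le_eq_sum_Icc {Ω : Type*} [MeasurableSpace Ω] (μ : Measure Ω)
    [IsFiniteMeasure μ] {S : Ω → ℝ} (hS : Measurable S) {H : ℕ → ℝ} {n : ℕ}
    (hH : StrictMonoOn H (Set.Iic n)) (hsupp : ∀ ω, ∃ j ≤ n, S ω = H j) {k : ℕ} (hk : k ≤ n) :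
    μ.real {ω | H k ≤ S ω} = ∑ j ∈ Finset.Icc k n, μ.real {ω | S ω = H j} := by
  have hinj : Set.InjOn H (Finset.Icc k n : Set ℕ) :=
    hH.injOn.mono fun j hj => (Finset.mem_Icc.mp hj).2
  have hset : {ω | H k ≤ S ω} = S ⁻¹' ((Finset.Icc k n).image H : Finset ℝ) := by
    ext ω
    obtain ⟨j, hj, hSj⟩ := hsupp ω
    simp only [Set.mem_ofPred_eq, Set.mem_preimage, coe_image, coe_Icc, hSj,
      hH.le_iff_le (Set.mem_Iic.mpr hk) (Set.mem_Iic.mpr hj)]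
    exact ⟨fun hkj => ⟨j, ⟨hkj, hj⟩, rfl⟩, fun ⟨i, ⟨hki, hi⟩, hij⟩ =>
      hH.injOn (Set.mem_Iic.mpr hi) (Set.mem_Iic.mpr hj) hij ▸ hki⟩
  rw [hset, ← sum_measureReal_preimage_singleton _ fun _ _ => hS (measurableSet_singleton _),
    sum_image hinj]
  rfl

section PartialSums

variable {h H : ℕ → ℝ} {n : ℕ}

lemma partialSum_sub_one_add (hH : ∀ k, H k = ∑ i ∈ Finset.Icc 1 k, h i) {k : ℕ} (hk : 1 ≤ k) :
    H (k - 1) + h k = H k := by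
  obtain ⟨m, rfl⟩ : ∃ m, k = m + 1 := ⟨k - 1, by omega⟩
  rw [Nat.add_sub_cancel, hH, hH, sum_Icc_succ_top hk]

lemma strictMonoOn_partialSum (hpos : ∀ i ∈ Finset.Icc 1 n, 0 < h i)
    (hH : ∀ k, H k = ∑ i ∈ Finset.Icc 1 k, h i) : StrictMonoOn H (Set.Iic n) := by
  refine strictMonoOn_Iic_of_lt_succ fun m hm => ?_
  rw [Order.succ_eq_add_one, ← partialSum_sub_one_add hH (Nat.le_add_left 1 m),
    Nat.add_sub_cancel]
  linarith [hpos (m + 1) (Finset.mem_Icc.mpr ⟨by omega, hm⟩)]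

lemma ramp_partialSum_eq_ite (hpos : ∀ i ∈ Finset.Icc 1 n, 0 < h i)
    (hH : ∀ k, H k = ∑ i ∈ Finset.Icc 1 k, h i) {j k : ℕ} (hj : j ≤ n) (hk : k ∈ Finset.Icc 1 n) :
    (max (H j - H (k - 1)) 0 - max (H j - H k) 0) / h k = if H k ≤ H j then 1 else 0 := by
  obtain ⟨hk1, hkn⟩ := Finset.mem_Icc.mp hk
  have hmono := strictMonoOn_partialSum hpos hH
  have hhk : h k = H k - H (k - 1) := by rw [← partialSum_sub_one_add hH hk1]; ring
  have hlt : H (k - 1) < H k := by linarith [hpos k hk]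
  refine hhk ▸ ramp_div_eq_ite hlt fun ⟨hleft, hright⟩ => ?_
  rw [hmono.lt_iff_lt (Set.mem_Iic.mpr (by omega)) (Set.mem_Iic.mpr hj)] at hleft
  rw [hmono.lt_iff_lt (Set.mem_Iic.mpr hj) (Set.mem_Iic.mpr hkn)] at hright
  omega

lemma sum_mul_ite_partialSum (hpos : ∀ i ∈ Finset.Icc 1 n, 0 < h i)
    (hH : ∀ k, H k = ∑ i ∈ Finset.Icc 1 k, h i) {j : ℕ} (hj : j ≤ n) :
    ∑ k ∈ Finset.Icc 1 n, h k * (if H k ≤ H j then 1 else 0) = H j := by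
  have hmono := strictMonoOn_partialSum hpos hH
  have hterm : ∀ k ∈ Finset.Icc 1 n,
      h k * (if H k ≤ H j then 1 else 0) = if k ≤ j then h k else 0 := by
    intro k hk
    simp only [hmono.le_iff_le (Set.mem_Iic.mpr (Finset.mem_Icc.mp hk).2) (Set.mem_Iic.mpr hj),
      mul_ite, mul_one, mul_zero]
  rw [sum_congr rfl hterm, ← sum_filter, hH]
  congr 1
  ext i
  simp only [mem_filter, Finset.mem_Icc]
  omega

end PartialSums

theorem maximallyConvex_comonotonic_decomposition_general
    {Ω : Type*} [MeasureSpace Ω] [IsProbabilityMeasure (volume : Measure Ω)]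
    (n : ℕ) (h α : ℕ → ℝ)
    (hpos : ∀ i ∈ Finset.Icc 1 n, 0 < h i)
    (hsum : ∑ i ∈ Finset.Icc 1 n, h i = 1)
    (H : ℕ → ℝ) (hH : ∀ k, H k = ∑ i ∈ Finset.Icc 1 k, h i)
    (Sbar : Ω → ℝ) (hmeas : Measurable Sbar)
    (hsupp : ∀ ω, ∃ k ≤ n, Sbar ω = H k)
    (hPk : ∀ k ∈ Finset.Icc 1 (n - 1),
      (volume {ω | Sbar ω = H k}).toReal = α k - α (k + 1))
    (hPn : (volume {ω | Sbar ω = 1}).toReal = α n)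
    (X : ℕ → Ω → ℝ)
    (hX : ∀ k, ∀ ω,
      X k ω = (max (Sbar ω - H (k - 1)) 0 - max (Sbar ω - H k) 0) / h k) :
    (∀ k ∈ Finset.Icc 1 n, ∀ ω, X k ω ∈ Set.Icc (0:ℝ) 1) ∧
    (∀ k ∈ Finset.Icc 1 n, (∫ ω, X k ω) = α k) ∧
    (∀ k ∈ Finset.Icc 1 n, ∀ ω ω', Sbar ω ≤ Sbar ω' → X k ω ≤ X k ω') ∧
    (∀ ω, Sbar ω = ∑ k ∈ Finset.Icc 1 n, h k * X k ω) := by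
  have hind : ∀ k ∈ Finset.Icc 1 n, ∀ ω, X k ω = if H k ≤ Sbar ω then 1 else 0 := by
    intro k hk ω
    obtain ⟨j, hj, hSj⟩ := hsupp ω
    rw [hX, hSj, ramp_partialSum_eq_ite hpos hH hj hk]
  refine ⟨fun k hk ω => ?_, fun k hk => ?_, fun k hk ω ω' hle => ?_, fun ω => ?_⟩
  · rw [hind k hk ω]
    split_ifs <;> simp
  · obtain ⟨hk1, hkn⟩ := Finset.mem_Icc.mp hk
    have hXk : X k = {ω | H k ≤ Sbar ω}.indicator 1 :=
      funext fun ω => (hind k hk ω).trans (by simp [indicator_apply])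
    have hmeasurable : MeasurableSet {ω | H k ≤ Sbar ω} := hmeas measurableSet_Ici
    rw [hXk, integral_indicator_one hmeasurable,
      measureReal_le_eq_sum_Icc _ hmeas (strictMonoOn_partialSum hpos hH) hsupp hkn]
    refine sum_Icc_eq_of_eq_sub_succ hkn (fun j hj => hPk j ?_) (by rwa [hH, hsum])
    simp only [Finset.mem_Ico, Finset.mem_Icc] at hj ⊢
    omega
  · rw [hind k hk ω, hind k hk ω']
    by_cases hkω : H k ≤ Sbar ω
    · simp [hkω, hkω.trans hle]
    · simp only [hkω, if_false]
      split_ifs <;> norm_num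
  · obtain ⟨j, hj, hSj⟩ := hsupp ω
    rw [sum_congr rfl fun k hk => by rw [hind k hk ω], hSj, sum_mul_ite_partialSum hpos hH hj]

/-- The maximally convex distribution `S̄` is comonotonically `(h,α)`-decomposable:
the variables `X_k = ((S̄ − H_{k−1})₊ − (S̄ − H_k)₊)/h_k` take values in `[0,1]`,
have means `α_k`, are nondecreasing functions of `S̄`, and sum (weighted) to `S̄`. -/
theorem maximallyConvex_comonotonic_decomposition
    {Ω : Type*} [MeasureSpace Ω] [IsProbabilityMeasure (volume : Measure Ω)]
    (n : ℕ) (hn : 1 ≤ n) (h α : ℕ → ℝ)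
    (hpos : ∀ i ∈ Finset.Icc 1 n, 0 < h i)
    (hsum : ∑ i ∈ Finset.Icc 1 n, h i = 1)
    (hαmem : ∀ i ∈ Finset.Icc 1 n, α i ∈ Set.Ioc (0:ℝ) 1)
    (hαdec : ∀ i ∈ Finset.Icc 1 (n - 1), α (i + 1) < α i)
    (H : ℕ → ℝ) (hH : ∀ k, H k = ∑ i ∈ Finset.Icc 1 k, h i)
    (Sbar : Ω → ℝ) (hmeas : Measurable Sbar)
    (hsupp : ∀ ω, ∃ k ≤ n, Sbar ω = H k)
    (hP0 : (volume {ω | Sbar ω = 0}).toReal = 1 - α 1)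
    (hPk : ∀ k ∈ Finset.Icc 1 (n - 1),
      (volume {ω | Sbar ω = H k}).toReal = α k - α (k + 1))
    (hPn : (volume {ω | Sbar ω = 1}).toReal = α n)
    (X : ℕ → Ω → ℝ)
    (hX : ∀ k, ∀ ω,
      X k ω = (max (Sbar ω - H (k - 1)) 0 - max (Sbar ω - H k) 0) / h k) :
    (∀ k ∈ Finset.Icc 1 n, ∀ ω, X k ω ∈ Set.Icc (0:ℝ) 1) ∧
    (∀ k ∈ Finset.Icc 1 n, (∫ ω, X k ω) = α k) ∧
    (∀ k ∈ Finset.Icc 1 n, ∀ ω ω', Sbar ω ≤ Sbar ω' → X k ω ≤ X k ω') ∧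
    (∀ ω, Sbar ω = ∑ k ∈ Finset.Icc 1 n, h k * X k ω) :=
  maximallyConvex_comonotonic_decomposition_general n h α hpos hsum H hH Sbar hmeas hsupp hPk hPn X
    hX
end

section
/- Let S be a [0,1]-valued random variable, and for v ∈ [0,1], h ∈ (0, 1−v fixed] define g(v) = E[φ(S; v, h)] = π_S(0) − π_S(v) + π_S(v + h). Then g is continuous and nondecreasing on [0, 1−h]. Consequently, if π_S(h) ≤ c and π_S(0) − π_S(1−h) ≥ c for some constant c ≥ 0 (with π_S(1) = 0), there exists v* ∈ [0, 1−h] with π_S(v*) − π_S(v* + h) = π_S(0) − c. -/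
/-!
For `s ≥ 0` the layer function `φ(s; v, h)` is the combination `s₊ − (s − v)₊ + (s − v − h)₊`
of hinge functions, so integrating gives `g v = π 0 − π v + π (v + h)`. Each hinge `t ↦ (s − t)₊`
is 1-Lipschitz, hence so is `π`, and `g` is continuous; `φ` is pointwise nondecreasing in `v`,
hence so is `g`. Since `g 0 = π h` and `g (1 − h) = π 0 − π (1 − h)` (as `π 1 = 0`), the
intermediate value theorem gives the required `v*`.
-/

open MeasureTheory Set

lemma ite_layer_eq_posPart {s h : ℝ} (hs : 0 ≤ s) (hh : 0 ≤ h) (v : ℝ) :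
    (if s ≤ v then s else if s ≤ v + h then v else s - h) =
      max (s - 0) 0 - max (s - v) 0 + max (s - (v + h)) 0 := by
  split_ifs
  · rw [max_eq_left (by linarith), max_eq_right (by linarith), max_eq_right (by linarith)]
    ring
  · rw [max_eq_left (by linarith), max_eq_left (by linarith), max_eq_right (by linarith)]
    ring
  · rw [max_eq_left (by linarith), max_eq_left (by linarith), max_eq_left (by linarith)]
    ring

lemma monotone_ite_layer {s h : ℝ} (hh : 0 ≤ h) :
    Monotone fun v : ℝ => if s ≤ v then s else if s ≤ v + h then v else s - h := by
  intro v v' hvv'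
  dsimp only
  split_ifs <;> linarith

section StopLoss

variable {Ω : Type*} [MeasurableSpace Ω] {μ : Measure Ω} {S : Ω → ℝ}

lemma integrable_posPart_sub [IsFiniteMeasure μ] (hS : Integrable S μ) (t : ℝ) :
    Integrable (fun ω => max (S ω - t) 0) μ :=
  (hS.sub (integrable_const t)).pos_part

lemma lipschitzWith_one_integral_posPart_sub [IsProbabilityMeasure μ] (hS : Integrable S μ) :
    LipschitzWith 1 fun t => ∫ ω, max (S ω - t) 0 ∂μ := by
  refine LipschitzWith.of_dist_le_mul fun t t' => ?_
  rw [NNReal.coe_one, one_mul, Real.dist_eq, Real.dist_eq,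
    ← integral_sub (integrable_posPart_sub hS t) (integrable_posPart_sub hS t')]
  calc ‖∫ ω, (max (S ω - t) 0 - max (S ω - t') 0) ∂μ‖ ≤ |t - t'| * μ.real univ :=
        norm_integral_le_of_norm_le_const (ae_of_all _ fun ω => by
          simpa [Real.norm_eq_abs, abs_sub_comm] using abs_max_sub_max_le_abs (S ω - t) (S ω - t') 0)
    _ = |t - t'| := by simp

lemma integral_posPart_sub_eq_zero {t : ℝ} (hSt : ∀ ω, S ω ≤ t) :
    ∫ ω, max (S ω - t) 0 ∂μ = 0 := by
  simp [fun ω => max_eq_right (sub_nonpos.2 (hSt ω))]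

variable [IsFiniteMeasure μ] {h : ℝ}

lemma integrable_ite_layer (hS : Integrable S μ) (hS0 : ∀ ω, 0 ≤ S ω) (hh : 0 ≤ h) (v : ℝ) :
    Integrable (fun ω => if S ω ≤ v then S ω else if S ω ≤ v + h then v else S ω - h) μ := by
  simp only [ite_layer_eq_posPart (hS0 _) hh]
  exact ((integrable_posPart_sub hS 0).sub (integrable_posPart_sub hS v)).add
    (integrable_posPart_sub hS (v + h))

lemma integral_ite_layer (hS : Integrable S μ) (hS0 : ∀ ω, 0 ≤ S ω) (hh : 0 ≤ h) (v : ℝ) :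
    ∫ ω, (if S ω ≤ v then S ω else if S ω ≤ v + h then v else S ω - h) ∂μ =
      ∫ ω, max (S ω - 0) 0 ∂μ - ∫ ω, max (S ω - v) 0 ∂μ + ∫ ω, max (S ω - (v + h)) 0 ∂μ := by
  have h0v : Integrable (fun ω => max (S ω - 0) 0 - max (S ω - v) 0) μ :=
    (integrable_posPart_sub hS 0).sub (integrable_posPart_sub hS v)
  simp only [ite_layer_eq_posPart (hS0 _) hh]
  rw [integral_add h0v (integrable_posPart_sub hS (v + h)), integral_sub (integrable_posPart_sub hS 0) (integrable_posPart_sub hS v)]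

lemma monotone_integral_ite_layer (hS : Integrable S μ) (hS0 : ∀ ω, 0 ≤ S ω) (hh : 0 ≤ h) :
    Monotone fun v => ∫ ω, (if S ω ≤ v then S ω else if S ω ≤ v + h then v else S ω - h) ∂μ :=
  fun _ _ hvv' => integral_mono (integrable_ite_layer hS hS0 hh _)
    (integrable_ite_layer hS hS0 hh _) fun _ => monotone_ite_layer hh hvv'

end StopLoss

/-- For `g(v) = E[φ(S; v, h)] = π_S(0) − π_S(v) + π_S(v+h)`: `g` is continuous and
nondecreasing on `[0, 1−h]`; consequently, if `π_S(h) ≤ c` and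
`π_S(0) − π_S(1−h) ≥ c` for some `c ≥ 0`, there exists `v* ∈ [0, 1−h]` with
`π_S(v*) − π_S(v*+h) = π_S(0) − c`. -/
theorem greedy_expectation_intermediate_value
    {Ω : Type*} [MeasureSpace Ω] [IsProbabilityMeasure (volume : Measure Ω)]
    (S : Ω → ℝ) (hS : Measurable S) (hSb : ∀ ω, S ω ∈ Icc (0:ℝ) 1)
    (hz : ℝ) (hz0 : 0 < hz) (hz1 : hz ≤ 1)
    (φ : ℝ → ℝ → ℝ)
    (hφ : ∀ v s, φ v s = if s ≤ v then s else if s ≤ v + hz then v else s - hz)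
    (π : ℝ → ℝ) (hπ : ∀ t, π t = ∫ ω, max (S ω - t) 0)
    (g : ℝ → ℝ) (hg : ∀ v, g v = ∫ ω, φ v (S ω)) :
    (∀ v ∈ Icc (0:ℝ) (1 - hz), g v = π 0 - π v + π (v + hz)) ∧
    ContinuousOn g (Icc (0:ℝ) (1 - hz)) ∧
    MonotoneOn g (Icc (0:ℝ) (1 - hz)) ∧
    (∀ c : ℝ, 0 ≤ c → π hz ≤ c → c ≤ π 0 - π (1 - hz) →
      ∃ v ∈ Icc (0:ℝ) (1 - hz), π v - π (v + hz) = π 0 - c) := by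
  have hSi : Integrable S :=
    .of_bound hS.aestronglyMeasurable 1 (ae_of_all _ fun ω => by
      rw [Real.norm_eq_abs, abs_of_nonneg (hSb ω).1]; exact (hSb ω).2)
  have hS0 : ∀ ω, 0 ≤ S ω := fun ω => (hSb ω).1
  have hπc : Continuous π := by
    rw [funext hπ]; exact (lipschitzWith_one_integral_posPart_sub hSi).continuous
  have hg_eq : ∀ v, g v = π 0 - π v + π (v + hz) := fun v => by
    simp only [hg, hφ, hπ]; exact integral_ite_layer hSi hS0 hz0.le v
  have hgc : ContinuousOn g (Icc (0:ℝ) (1 - hz)) :=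
    ((continuous_const.sub hπc).add (hπc.comp (continuous_add_const hz))).continuousOn.congr
      fun v _ => hg_eq v
  have hgm : Monotone g := fun v v' hvv' => by
    simp only [hg, hφ]; exact monotone_integral_ite_layer hSi hS0 hz0.le hvv'
  have hπ1 : π 1 = 0 := by rw [hπ]; exact integral_posPart_sub_eq_zero fun ω => (hSb ω).2
  refine ⟨fun v _ => hg_eq v, hgc, hgm.monotoneOn _, fun c _ hc0 hc1 => ?_⟩
  have hc : c ∈ Icc (g 0) (g (1 - hz)) := by
    rw [hg_eq, hg_eq, sub_add_cancel, hπ1, zero_add]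
    exact ⟨by simpa using hc0, by simpa using hc1⟩
  obtain ⟨v, hv, hgv⟩ := intermediate_value_Icc (by linarith) hgc hc
  exact ⟨v, hv, by linarith [hg_eq v]⟩
end

section
/- Let h₁,…,hₙ > 0 with Σ h_k = 1 and α₁ > … > αₙ in (0,1]. If S is a [0,1]-valued random variable with E[S] = Σ_k h_k α_k and π_S(H_k) ≤ Σ_{i>k} h_i α_i for k = 1,…,n−1, then Var(S) ≤ Σ_{i,j} h_i h_j (min(α_i, α_j) − α_i α_j). -/
open MeasureTheory ProbabilityTheory Set Finset

/-!
The stop-loss transform `π(t) = E[(S - t)₊]` is convex and `E[S²] = 2 ∫₀¹ π`. On each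
`[H_{k-1}, H_k]`, `π` lies below its chord, and the hypotheses bound the chord's endpoints by
`m_k = Σ_{i>k} h_i α_i` (at `k = 0` and `k = n` through `E[S]` and `S ≤ 1`). The resulting
trapezoid sum `Σ_k h_k (m_{k-1} + m_k)` is `E[S̄²]` for `S̄ = Σ_i h_i 1{U ≤ α_i}`, `U` uniform,
whose stop-loss transform interpolates the `m_k` linearly; since `α` is decreasing, it equals
`Σ_{i,j} h_i h_j min(α_i, α_j)`.
-/

lemma ConvexOn.map_add_map_reflect_le {f : ℝ → ℝ} {a b x : ℝ} (hf : ConvexOn ℝ (Icc a b) f)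
    (hx : x ∈ Icc a b) : f x + f (a + b - x) ≤ f a + f b := by
  rcases hx.1.eq_or_lt with rfl | _
  · simp
  have hab : b - a ≠ 0 := by linarith [hx.2]
  have hp : 0 ≤ (b - x) / (b - a) := div_nonneg (by linarith [hx.2]) (by linarith [hx.2])
  have hq : 0 ≤ (x - a) / (b - a) := div_nonneg (by linarith) (by linarith [hx.2])
  have hpq : (b - x) / (b - a) + (x - a) / (b - a) = 1 := by field_simp; ring
  have ha : a ∈ Icc a b := left_mem_Icc.2 (by linarith [hx.2])
  have hb : b ∈ Icc a b := right_mem_Icc.2 (by linarith [hx.2])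
  have h₁ := hf.2 ha hb hp hq hpq
  have h₂ := hf.2 ha hb hq hp (by linarith)
  simp only [smul_eq_mul] at h₁ h₂
  have e₁ : (b - x) / (b - a) * a + (x - a) / (b - a) * b = x := by field_simp; ring
  have e₂ : (x - a) / (b - a) * a + (b - x) / (b - a) * b = a + b - x := by field_simp; ring
  rw [e₁] at h₁
  rw [e₂] at h₂
  linear_combination h₁ + h₂ + (f a + f b) * hpq

theorem ConvexOn.intervalIntegral_le_trapezoid {f : ℝ → ℝ} {a b : ℝ}
    (hf : ConvexOn ℝ (Icc a b) f) (hint : IntervalIntegrable f volume a b) (hab : a ≤ b) :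
    ∫ x in a..b, f x ≤ (b - a) * (f a + f b) / 2 := by
  have hreflect : ∫ x in a..b, f (a + b - x) = ∫ x in a..b, f x := by
    simp [intervalIntegral.integral_comp_sub_left]
  have hint' : IntervalIntegrable (fun x => f (a + b - x)) volume a b := by
    simpa using (hint.comp_sub_left (a + b)).symm
  have := intervalIntegral.integral_mono_on hab (hint.add hint') intervalIntegrable_const
    fun x hx => hf.map_add_map_reflect_le hx
  rw [intervalIntegral.integral_add hint hint', hreflect, intervalIntegral.integral_const,
    smul_eq_mul] at this
  linarith

theorem ConvexOn.intervalIntegral_le_sum_trapezoid {f : ℝ → ℝ} (hf : ConvexOn ℝ univ f)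
    {n : ℕ} {x : ℕ → ℝ} (hx : ∀ k < n, x k ≤ x (k + 1)) :
    ∫ t in x 0..x n, f t ≤ ∑ k ∈ range n, (x (k + 1) - x k) * (f (x k) + f (x (k + 1))) / 2 := by
  have hcont : Continuous f := continuousOn_univ.1 (hf.continuousOn isOpen_univ)
  rw [← intervalIntegral.sum_integral_adjacent_intervals fun k _ => hcont.intervalIntegrable _ _]
  refine sum_le_sum fun k hk => ?_
  exact (hf.subset (subset_univ _) (convex_Icc _ _)).intervalIntegral_le_trapezoid
    (hcont.intervalIntegrable _ _) (hx k (mem_range.1 hk))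

section StopLoss

variable {Ω : Type*} [MeasurableSpace Ω]

noncomputable def stopLoss (μ : Measure Ω) (X : Ω → ℝ) (t : ℝ) : ℝ :=
  ∫ ω, max (X ω - t) 0 ∂μ

variable {μ : Measure Ω} {X : Ω → ℝ}

lemma integrable_max_sub_zero [IsFiniteMeasure μ] (hX : Integrable X μ) (t : ℝ) :
    Integrable (fun ω => max (X ω - t) 0) μ :=
  (hX.sub (integrable_const t)).pos_part

lemma convexOn_stopLoss [IsFiniteMeasure μ] (hX : Integrable X μ) :
    ConvexOn ℝ univ (stopLoss μ X) := by
  refine ⟨convex_univ, fun s _ t _ a b ha hb hab => ?_⟩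
  have hpoint : ∀ ω, max (X ω - (a • s + b • t)) 0
      ≤ a * max (X ω - s) 0 + b * max (X ω - t) 0 := fun ω => by
    have hs := mul_le_mul_of_nonneg_left (le_max_left (X ω - s) 0) ha
    have ht := mul_le_mul_of_nonneg_left (le_max_left (X ω - t) 0) hb
    have : X ω - (a • s + b • t) = a * (X ω - s) + b * (X ω - t) := by
      simp only [smul_eq_mul]; linear_combination X ω * hab.symm
    exact max_le (by linarith) (by positivity)
  have hs := (integrable_max_sub_zero hX s).const_mul a
  have ht := (integrable_max_sub_zero hX t).const_mul b
  calc stopLoss μ X (a • s + b • t)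
      ≤ ∫ ω, a * max (X ω - s) 0 + b * max (X ω - t) 0 ∂μ :=
        integral_mono (integrable_max_sub_zero hX _) (hs.add ht) hpoint
    _ = a • stopLoss μ X s + b • stopLoss μ X t := by
        rw [integral_add hs ht, integral_const_mul, integral_const_mul]; rfl

lemma stopLoss_zero_of_nonneg (hX : ∀ ω, 0 ≤ X ω) : stopLoss μ X 0 = ∫ ω, X ω ∂μ := by
  simp [stopLoss, hX]

lemma stopLoss_eq_zero_of_le {t : ℝ} (hX : ∀ ω, X ω ≤ t) : stopLoss μ X t = 0 := by
  simp [stopLoss, hX]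

lemma intervalIntegral_max_sub_zero {x b : ℝ} (hx : x ∈ Icc 0 b) :
    ∫ t in 0..b, max (x - t) 0 = x ^ 2 / 2 := by
  have hcont : Continuous fun t : ℝ => max (x - t) 0 := by fun_prop
  rw [← intervalIntegral.integral_add_adjacent_intervals (b := x)
    (hcont.intervalIntegrable _ _) (hcont.intervalIntegrable _ _)]
  have hleft : ∫ t in 0..x, max (x - t) 0 = ∫ t in 0..x, (x - t) :=
    intervalIntegral.integral_congr fun t ht => by
      rw [uIcc_of_le hx.1] at ht; exact max_eq_left (by linarith [ht.2])
  have hright : ∫ t in x..b, max (x - t) 0 = ∫ _ in x..b, (0 : ℝ) :=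
    intervalIntegral.integral_congr fun t ht => by
      rw [uIcc_of_le hx.2] at ht; exact max_eq_right (by linarith [ht.1])
  rw [hleft, hright, intervalIntegral.integral_sub intervalIntegrable_const
    intervalIntegral.intervalIntegrable_id]
  simp
  ring

lemma integral_sq_eq_two_mul_integral_stopLoss [IsFiniteMeasure μ] {b : ℝ} (hX : Measurable X)
    (hXb : ∀ ω, X ω ∈ Icc 0 b) :
    ∫ ω, X ω ^ 2 ∂μ = 2 * ∫ t in 0..b, stopLoss μ X t := by
  rcases isEmpty_or_nonempty Ω with hΩ | hΩ
  · simp [stopLoss, Measure.eq_zero_of_isEmpty μ]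
  have hb : 0 ≤ b := (hXb (Classical.arbitrary Ω)).1.trans (hXb _).2
  have hpoint : ∀ ω, X ω ^ 2 = 2 * ∫ t in Ioc 0 b, max (X ω - t) 0 := fun ω => by
    rw [← intervalIntegral.integral_of_le hb, intervalIntegral_max_sub_zero (hXb ω)]; ring
  have hmem : ∀ᵐ p ∂μ.prod (volume.restrict (Ioc 0 b)), p.2 ∈ Ioc 0 b :=
    Measure.quasiMeasurePreserving_snd.ae (ae_restrict_mem measurableSet_Ioc)
  have hint : Integrable (Function.uncurry fun ω t => max (X ω - t) 0)
      (μ.prod (volume.restrict (Ioc 0 b))) := by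
    refine (integrable_const b).mono' (by fun_prop) ?_
    filter_upwards [hmem] with p hp
    rw [Function.uncurry_def, Real.norm_of_nonneg (le_max_right _ _)]
    exact max_le (by linarith [(hXb p.1).2, hp.1]) hb
  simp_rw [hpoint, integral_const_mul, intervalIntegral.integral_of_le hb, stopLoss]
  rw [integral_integral_swap hint]

lemma integral_sq_le_sum_trapezoid_stopLoss [IsFiniteMeasure μ] {b : ℝ} (hX : Measurable X)
    (hXb : ∀ ω, X ω ∈ Icc 0 b) {n : ℕ} {x : ℕ → ℝ} (hx0 : x 0 = 0) (hxn : x n = b)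
    (hx : ∀ k < n, x k ≤ x (k + 1)) :
    ∫ ω, X ω ^ 2 ∂μ
      ≤ ∑ k ∈ range n, (x (k + 1) - x k) * (stopLoss μ X (x k) + stopLoss μ X (x (k + 1))) := by
  have hXint : Integrable X μ := (integrable_const b).mono' hX.aestronglyMeasurable
    (ae_of_all _ fun ω => by rw [Real.norm_of_nonneg (hXb ω).1]; exact (hXb ω).2)
  calc ∫ ω, X ω ^ 2 ∂μ = 2 * ∫ t in x 0..x n, stopLoss μ X t := by
        rw [hx0, hxn, integral_sq_eq_two_mul_integral_stopLoss hX hXb]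
    _ ≤ 2 * ∑ k ∈ range n,
          (x (k + 1) - x k) * (stopLoss μ X (x k) + stopLoss μ X (x (k + 1))) / 2 := by
        gcongr
        exact (convexOn_stopLoss hXint).intervalIntegral_le_sum_trapezoid hx
    _ = _ := by
        rw [mul_sum]
        exact sum_congr rfl fun k _ => by ring

end StopLoss

lemma sum_range_succ_eq_sum_Icc_one {M : Type*} [AddCommMonoid M] (f : ℕ → M) (n : ℕ) :
    ∑ k ∈ range n, f (k + 1) = ∑ k ∈ Icc 1 n, f k := by
  induction n with
  | zero => simp
  | succ n ih => rw [sum_range_succ, ih, sum_Icc_succ_top (by omega)]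

lemma sum_sum_mul_min_eq {h α : ℕ → ℝ} {n : ℕ} (hα : AntitoneOn α (Set.Icc 1 n)) :
    ∑ i ∈ Icc 1 n, ∑ j ∈ Icc 1 n, h i * h j * min (α i) (α j)
      = ∑ k ∈ range n, h (k + 1) * α (k + 1) * (∑ i ∈ Icc 1 k, h i + ∑ i ∈ Icc 1 (k + 1), h i) := by
  induction n with
  | zero => simp
  | succ n ih =>
    have hmin : ∀ i ∈ Finset.Icc 1 (n + 1), min (α i) (α (n + 1)) = α (n + 1) := fun i hi =>
      min_eq_right (hα (by simpa using hi) (by simp) (Finset.mem_Icc.1 hi).2)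
    have hcol : ∑ i ∈ Finset.Icc 1 n, h i * h (n + 1) * min (α i) (α (n + 1))
        = h (n + 1) * α (n + 1) * ∑ i ∈ Finset.Icc 1 n, h i := by
      rw [mul_sum]
      refine sum_congr rfl fun i hi => ?_
      rw [hmin i (Finset.Icc_subset_Icc_right (by omega) hi)]
      ring
    have hrow : ∑ j ∈ Finset.Icc 1 (n + 1), h (n + 1) * h j * min (α (n + 1)) (α j)
        = h (n + 1) * α (n + 1) * ∑ j ∈ Finset.Icc 1 (n + 1), h j := by
      rw [mul_sum]
      refine sum_congr rfl fun j hj => ?_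
      rw [min_comm, hmin j hj]
      ring
    rw [sum_Icc_succ_top (by omega), hrow,
      sum_congr rfl fun i _ => sum_Icc_succ_top (by omega : 1 ≤ n + 1) _, sum_add_distrib, hcol,
      ih (hα.mono (Set.Icc_subset_Icc_right (by omega))), sum_range_succ]
    ring

lemma sum_mul_tail_add_tail_eq (h α : ℕ → ℝ) (n : ℕ) :
    ∑ k ∈ range n, h (k + 1) *
        (∑ i ∈ Icc (k + 1) n, h i * α i + ∑ i ∈ Icc (k + 1 + 1) n, h i * α i)
      = ∑ k ∈ range n, h (k + 1) * α (k + 1) * (∑ i ∈ Icc 1 k, h i + ∑ i ∈ Icc 1 (k + 1), h i) := by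
  induction n with
  | zero => simp
  | succ n ih =>
    have hshift : ∀ k ∈ range n,
        h (k + 1) *
            (∑ i ∈ Icc (k + 1) (n + 1), h i * α i + ∑ i ∈ Icc (k + 1 + 1) (n + 1), h i * α i)
          = h (k + 1) * (∑ i ∈ Icc (k + 1) n, h i * α i + ∑ i ∈ Icc (k + 1 + 1) n, h i * α i)
            + 2 * (h (n + 1) * α (n + 1)) * h (k + 1) := fun k hk => by
      have := mem_range.1 hk
      rw [sum_Icc_succ_top (by omega : k + 1 ≤ n + 1),
        sum_Icc_succ_top (by omega : k + 1 + 1 ≤ n + 1)]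
      ring
    rw [sum_range_succ, sum_congr rfl hshift, sum_add_distrib, ih, ← mul_sum,
      sum_range_succ_eq_sum_Icc_one h n, sum_range_succ, Finset.Icc_self, sum_singleton,
      Finset.Icc_eq_empty (by omega : ¬n + 1 + 1 ≤ n + 1), sum_empty,
      sum_Icc_succ_top (by omega : 1 ≤ n + 1)]
    ring

theorem variance_le_maxVar_general
    {Ω : Type*} [MeasureSpace Ω] [IsProbabilityMeasure (volume : Measure Ω)]
    (n : ℕ) (h α : ℕ → ℝ)
    (hpos : ∀ i ∈ Finset.Icc 1 n, 0 < h i)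
    (hsum : ∑ i ∈ Finset.Icc 1 n, h i = 1)
    (hαdec : ∀ i ∈ Finset.Icc 1 (n - 1), α (i + 1) < α i)
    (H : ℕ → ℝ) (hH : ∀ k, H k = ∑ i ∈ Finset.Icc 1 k, h i)
    (S : Ω → ℝ) (hSmeas : Measurable S) (hSb : ∀ ω, S ω ∈ Set.Icc (0:ℝ) 1)
    (hSmean : (∫ ω, S ω) = ∑ k ∈ Finset.Icc 1 n, h k * α k)
    (hSLT : ∀ k ∈ Finset.Icc 1 (n - 1),
      (∫ ω, max (S ω - H k) 0) ≤ ∑ i ∈ Finset.Icc (k + 1) n, h i * α i) :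
    variance S (volume : Measure Ω)
      ≤ ∑ i ∈ Finset.Icc 1 n, ∑ j ∈ Finset.Icc 1 n,
          h i * h j * (min (α i) (α j) - α i * α j) := by
  have hSmemLp : MemLp S 2 volume := MemLp.of_bound hSmeas.aestronglyMeasurable 1
    (ae_of_all _ fun ω => by rw [Real.norm_of_nonneg (hSb ω).1]; exact (hSb ω).2)
  have hα : AntitoneOn α (Set.Icc 1 n) := antitoneOn_of_add_one_le Set.ordConnected_Icc
    fun i _ hi hi' => (hαdec i (Finset.mem_Icc.2 ⟨hi.1, by have := hi'.2; omega⟩)).le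
  have hpos' : ∀ k < n, 0 < h (k + 1) := fun k hk =>
    hpos (k + 1) (Finset.mem_Icc.2 ⟨by omega, hk⟩)
  have hH0 : H 0 = 0 := by simp [hH]
  have hHn : H n = 1 := hH n ▸ hsum
  have hstep : ∀ k, H (k + 1) - H k = h (k + 1) := fun k => by
    rw [hH, hH, sum_Icc_succ_top (by omega)]; ring
  set T : ℕ → ℝ := fun k => ∑ i ∈ Finset.Icc (k + 1) n, h i * α i
  have hstopLoss_le : ∀ k ≤ n, stopLoss volume S (H k) ≤ T k := fun k hk => by
    rcases Nat.eq_zero_or_pos k with rfl | hk0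
    · rw [hH0, stopLoss_zero_of_nonneg fun ω => (hSb ω).1, hSmean]
    rcases hk.eq_or_lt with rfl | hkn
    · rw [hHn, stopLoss_eq_zero_of_le fun ω => (hSb ω).2]
      simp [T]
    · exact hSLT k (Finset.mem_Icc.2 ⟨hk0, by omega⟩)
  have hsq := integral_sq_le_sum_trapezoid_stopLoss (μ := volume) hSmeas hSb hH0 hHn
    fun k hk => by linarith [hstep k, hpos' k hk]
  simp only [hstep] at hsq
  calc variance S volume = (∫ ω, S ω ^ 2) - (∑ k ∈ Finset.Icc 1 n, h k * α k) ^ 2 := by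
        rw [variance_eq_sub hSmemLp, hSmean]; rfl
    _ ≤ ∑ k ∈ range n, h (k + 1) * (T k + T (k + 1))
          - (∑ k ∈ Finset.Icc 1 n, h k * α k) ^ 2 := by
        grw [hsq]
        gcongr with k hk
        · exact (hpos' k (mem_range.1 hk)).le
        · exact hstopLoss_le k (mem_range.1 hk).le
        · exact hstopLoss_le (k + 1) (mem_range.1 hk)
    _ = _ := by
        rw [sum_mul_tail_add_tail_eq, ← sum_sum_mul_min_eq hα, sq, sum_mul_sum, ← sum_sub_distrib]
        refine sum_congr rfl fun i _ => ?_
        rw [← sum_sub_distrib]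
        exact sum_congr rfl fun j _ => by ring

/-- Maximum-variance bound: if `S ∈ [0,1]` with `E[S] = Σ h_k α_k` and
`π_S(H_k) ≤ Σ_{i>k} h_i α_i` for `k = 1,…,n−1`, then
`Var(S) ≤ Σ_{i,j} h_i h_j (min(α_i,α_j) − α_i α_j)`. -/
theorem variance_le_maxVar
    {Ω : Type*} [MeasureSpace Ω] [IsProbabilityMeasure (volume : Measure Ω)]
    (n : ℕ) (hn : 1 ≤ n) (h α : ℕ → ℝ)
    (hpos : ∀ i ∈ Finset.Icc 1 n, 0 < h i)
    (hsum : ∑ i ∈ Finset.Icc 1 n, h i = 1)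
    (hαmem : ∀ i ∈ Finset.Icc 1 n, α i ∈ Set.Ioc (0:ℝ) 1)
    (hαdec : ∀ i ∈ Finset.Icc 1 (n - 1), α (i + 1) < α i)
    (H : ℕ → ℝ) (hH : ∀ k, H k = ∑ i ∈ Finset.Icc 1 k, h i)
    (S : Ω → ℝ) (hSmeas : Measurable S) (hSb : ∀ ω, S ω ∈ Set.Icc (0:ℝ) 1)
    (hSmean : (∫ ω, S ω) = ∑ k ∈ Finset.Icc 1 n, h k * α k)
    (hSLT : ∀ k ∈ Finset.Icc 1 (n - 1),
      (∫ ω, max (S ω - H k) 0) ≤ ∑ i ∈ Finset.Icc (k + 1) n, h i * α i) :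
    variance S (volume : Measure Ω)
      ≤ ∑ i ∈ Finset.Icc 1 n, ∑ j ∈ Finset.Icc 1 n,
          h i * h j * (min (α i) (α j) - α i * α j) :=
  variance_le_maxVar_general n h α hpos hsum hαdec H hH S hSmeas hSb hSmean hSLT
end
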